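/- A canonical Φ-term t is a Φ-normal form if and only if the λ-term ⟦t⟧ is a normal form with respect to weak call-by-value reduction. -/
import Mathlib


/-- Untyped λ-terms over variables drawn from ℕ (a denumerable totally ordered set). -/
inductive Lam : Type
  | var : ℕ → Lam
  | lam : ℕ → Lam → Lam
  | app : Lam → Lam → Lam
deriving DecidableEq, Repr

namespace Lam

/-- Capture-permitting substitution M{N/x} (adequate for weak reduction of closed terms). -/
def subst : Lam → ℕ → Lam → Lam
  | var y, x, N => if y = x then N else var y
  | lam y M, x, N => if y = x then lam y M else lam y (subst M x N)
  | app M₁ M₂, x, N => app (subst M₁ x N) (subst M₂ x N)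

/-- Simultaneous substitution along a partial assignment of terms to variables. -/
def msubst : Lam → (ℕ → Option Lam) → Lam
  | var y, σ => (σ y).getD (var y)
  | lam y M, σ => lam y (msubst M (fun z => if z = y then none else σ z))
  | app M₁ M₂, σ => app (msubst M₁ σ) (msubst M₂ σ)

/-- The assignment sending each `xᵢ` to `tᵢ` (first match wins). -/
def substOf (xs : List ℕ) (ts : List Lam) : ℕ → Option Lam :=
  fun y => (xs.zip ts).lookup y

/-- Values: variables and abstractions. -/
def IsValue : Lam → Prop
  | var _ => True
  | lam _ _ => True
  | app _ _ => False

/-- Weak call-by-value reduction. -/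
inductive CbvStep : Lam → Lam → Prop
  | beta {x : ℕ} {M V : Lam} : IsValue V → CbvStep (app (lam x M) V) (subst M x V)
  | appL {M N L : Lam} : CbvStep M N → CbvStep (app M L) (app N L)
  | appR {M N L : Lam} : CbvStep M N → CbvStep (app L M) (app L N)

/-- A →v-normal form. -/
def CbvNormal (M : Lam) : Prop := ¬ ∃ N, CbvStep M N

/-- Free variables, as a finite set. -/
def fv : Lam → Finset ℕ
  | var x => {x}
  | lam x M => fv M \ {x}
  | app M N => fv M ∪ fv N

/-- The sequence (without repetitions, in variable order) of free variables of `M`. -/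
def fvList (M : Lam) : List ℕ := (fv M).sort (· ≤ ·)

def Closed (M : Lam) : Prop := fv M = ∅

/-- The size |M| of a λ-term. -/
def size : Lam → ℕ
  | var _ => 1
  | lam _ M => size M + 1
  | app M N => size M + size N + 1

end Lam

/-- `NSteps r n a b`: `a` reduces to `b` in exactly `n` `r`-steps. -/
def NSteps {α : Type*} (r : α → α → Prop) : ℕ → α → α → Prop
  | 0 => fun a b => a = b
  | n + 1 => fun a c => ∃ b, r a b ∧ NSteps r n b c

/-- Terms of the constructor rewrite system Φ: variables, the binary function symbol
`app`, and for every λ-term `M` and variable `x` a constructor `c_{x,M}` (here `con x M`),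
whose arity is the length of `FV(λx.M)`. -/
inductive PTerm : Type
  | var : ℕ → PTerm
  | app : PTerm → PTerm → PTerm
  | con : ℕ → Lam → List PTerm → PTerm

namespace PTerm

/-- Well-formed Φ-terms: every constructor is applied to as many arguments as its arity. -/
inductive WF : PTerm → Prop
  | var {x} : WF (var x)
  | app {u v} : WF u → WF v → WF (app u v)
  | con {x M ts} : ts.length = (Lam.fvList (Lam.lam x M)).length →
      (∀ t ∈ ts, WF t) → WF (con x M ts)

/-- Constructor terms: built only from constructors. -/
inductive IsConTerm : PTerm → Prop
  | con {x M ts} : (∀ t ∈ ts, IsConTerm t) → IsConTerm (con x M ts)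

/-- Canonical closed Φ-terms. -/
inductive Canonical : PTerm → Prop
  | con {t} : IsConTerm t → Canonical t
  | app {u v} : Canonical u → Canonical v → Canonical (app u v)

/-- Closed Φ-terms contain no variables. -/
inductive ClosedP : PTerm → Prop
  | app {u v} : ClosedP u → ClosedP v → ClosedP (app u v)
  | con {x M ts} : (∀ t ∈ ts, ClosedP t) → ClosedP (con x M ts)

/-- Substitution of Φ-terms for variables. -/
def psubst (σ : ℕ → Option PTerm) : PTerm → PTerm
  | var y => (σ y).getD (var y)
  | app u v => app (psubst σ u) (psubst σ v)
  | con x M ts => con x M (ts.attach.map (fun t => psubst σ t.1))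
decreasing_by
  all_goals simp_wf
  all_goals try have := List.sizeOf_lt_of_mem t.2
  all_goals omega

/-- The assignment sending each `xᵢ` to `tᵢ`. -/
def substOfP (xs : List ℕ) (ts : List PTerm) : ℕ → Option PTerm :=
  fun y => (xs.zip ts).lookup y

/-- Variables occurring in a Φ-term. -/
def pvars : PTerm → List ℕ
  | var y => [y]
  | app u v => pvars u ++ pvars v
  | con _ _ ts => ts.attach.flatMap (fun t => pvars t.1)
decreasing_by
  all_goals simp_wf
  all_goals try have := List.sizeOf_lt_of_mem t.2
  all_goals omega

end PTerm

/-- The translation ⟨·⟩ from λ-terms to Φ-terms. -/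
def transPhi : Lam → PTerm
  | .var x => .var x
  | .lam x M => .con x M ((Lam.fvList (.lam x M)).map .var)
  | .app M N => .app (transPhi M) (transPhi N)

/-- The readback ⟦·⟧ from Φ-terms to λ-terms. -/
def readback : PTerm → Lam
  | .var x => .var x
  | .app u v => .app (readback u) (readback v)
  | .con x M ts =>
      Lam.msubst (.lam x M)
        (Lam.substOf (Lam.fvList (.lam x M)) (ts.attach.map (fun t => readback t.1)))
decreasing_by
  all_goals simp_wf
  all_goals try have := List.sizeOf_lt_of_mem t.2
  all_goals omega

/-- One-step rewriting in Φ: the rule app(c_{x,M}(x₁,…,xₙ), x) → ⟨M⟩ (matched variables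
instantiated by constructor terms), closed under arbitrary contexts. -/
inductive PhiStep : PTerm → PTerm → Prop
  | root {x : ℕ} {M : Lam} {ts : List PTerm} {v : PTerm} :
      (∀ t ∈ ts, PTerm.IsConTerm t) → PTerm.IsConTerm v →
      ts.length = (Lam.fvList (.lam x M)).length →
      PhiStep (.app (.con x M ts) v)
        (PTerm.psubst (PTerm.substOfP (Lam.fvList (.lam x M) ++ [x]) (ts ++ [v])) (transPhi M))
  | appL {u u' v} : PhiStep u u' → PhiStep (.app u v) (.app u' v)
  | appR {u v v'} : PhiStep v v' → PhiStep (.app u v) (.app u v')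
  | conArg {x M ts₁ t t' ts₂} : PhiStep t t' →
      PhiStep (.con x M (ts₁ ++ t :: ts₂)) (.con x M (ts₁ ++ t' :: ts₂))

/-- Φ-normal forms. -/
def PhiNormal (t : PTerm) : Prop := ¬ ∃ u, PhiStep t u

lemma cbvNormal_lam (x : ℕ) (M : Lam) : Lam.CbvNormal (.lam x M) := by
  rintro ⟨N, h⟩; cases h

lemma readback_con (x : ℕ) (M : Lam) (ts : List PTerm) :
    ∃ N, readback (.con x M ts) = .lam x N := by
  rw [readback]
  exact ⟨_, rfl⟩

lemma readback_app (u v : PTerm) :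
    readback (.app u v) = .app (readback u) (readback v) := by
  rw [readback]

lemma conterm_phiNormal {t : PTerm} (h : PTerm.IsConTerm t) : PhiNormal t := by
  induction h with
  | con hts ih =>
    rintro ⟨u, hstep⟩
    cases hstep with
    | conArg hst => exact ih _ (by simp) ⟨_, hst⟩

lemma cbv_app_inv {A B N : Lam} (h : Lam.CbvStep (.app A B) N) :
    (∃ x M, A = .lam x M ∧ Lam.IsValue B) ∨
      (∃ A', Lam.CbvStep A A') ∨ (∃ B', Lam.CbvStep B B') := by
  cases h with
  | beta hv => exact Or.inl ⟨_, _, rfl, hv⟩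
  | appL h => exact Or.inr (Or.inl ⟨_, h⟩)
  | appR h => exact Or.inr (Or.inr ⟨_, h⟩)

lemma phi_app_inv {u v w : PTerm} (h : PhiStep (.app u v) w) :
    (∃ x M ts, u = .con x M ts ∧ PTerm.IsConTerm v) ∨
      (∃ u', PhiStep u u') ∨ (∃ v', PhiStep v v') := by
  cases h with
  | root hts hv hlen => exact Or.inl ⟨_, _, _, rfl, hv⟩
  | appL h => exact Or.inr (Or.inl ⟨_, h⟩)
  | appR h => exact Or.inr (Or.inr ⟨_, h⟩)

/-- A canonical Φ-term t is a Φ-normal form iff ⟦t⟧ is a normal form for weak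
call-by-value reduction. -/
theorem canonical_normal_iff (t : PTerm) (hwf : PTerm.WF t) (hcl : PTerm.ClosedP t)
    (hcan : PTerm.Canonical t) :
    PhiNormal t ↔ Lam.CbvNormal (readback t) := by
  revert hwf hcl
  induction hcan with
  | con h =>
    rename_i s
    intro _ _
    obtain ⟨x, M, ts, hts, rfl⟩ : ∃ x M ts, (∀ r ∈ ts, PTerm.IsConTerm r) ∧
        s = PTerm.con x M ts := by
      cases h with
      | con hts => exact ⟨_, _, _, hts, rfl⟩
    obtain ⟨N, hN⟩ := readback_con x M ts
    rw [hN]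
    exact iff_of_true (conterm_phiNormal (.con hts)) (cbvNormal_lam x N)
  | app hu hv ihu ihv =>
    rename_i u v
    intro hwf hcl
    obtain ⟨hwu, hwv⟩ : PTerm.WF u ∧ PTerm.WF v := by
      cases hwf with | app a b => exact ⟨a, b⟩
    obtain ⟨hcu, hcv⟩ : PTerm.ClosedP u ∧ PTerm.ClosedP v := by
      cases hcl with | app a b => exact ⟨a, b⟩
    have IU := ihu hwu hcu
    have IV := ihv hwv hcv
    rw [readback_app]
    constructor
    · intro hn
      rintro ⟨N, hstep⟩
      rcases cbv_app_inv hstep with ⟨x, M', hA, hval⟩ | ⟨A', hs⟩ | ⟨B', hs⟩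
      · -- top-level beta: u must be a constructor term, v too
        obtain ⟨x', M, ts, hts, rfl⟩ : ∃ x' M ts, (∀ s ∈ ts, PTerm.IsConTerm s) ∧
            u = PTerm.con x' M ts := by
          cases hu with
          | con hc =>
            cases hc with
            | con hts => exact ⟨_, _, _, hts, rfl⟩
          | app _ _ =>
            rw [readback_app] at hA
            exact absurd hA (by simp)
        have hvc : PTerm.IsConTerm v := by
          cases hv with
          | con hc => exact hc
          | app _ _ =>
            rw [readback_app] at hval
            exact absurd hval (by simp [Lam.IsValue])
        have hlen : ts.length = (Lam.fvList (.lam x' M)).length := by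
          cases hwu with | con h1 _ => exact h1
        exact hn ⟨_, PhiStep.root hts hvc hlen⟩
      · have hnu : PhiNormal u := fun ⟨u', h⟩ => hn ⟨_, PhiStep.appL h⟩
        exact (IU.mp hnu) ⟨_, hs⟩
      · have hnv : PhiNormal v := fun ⟨v', h⟩ => hn ⟨_, PhiStep.appR h⟩
        exact (IV.mp hnv) ⟨_, hs⟩
    · intro hn
      rintro ⟨w, hstep⟩
      rcases phi_app_inv hstep with ⟨x, M, ts, rfl, hvc⟩ | ⟨u', hs⟩ | ⟨v', hs⟩
      · obtain ⟨N, hN⟩ := readback_con x M ts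
        have hval : Lam.IsValue (readback v) := by
          cases hvc with
          | con _ =>
            obtain ⟨N', hN'⟩ := readback_con _ _ _
            rw [hN']; trivial
        exact hn ⟨_, by rw [hN]; exact Lam.CbvStep.beta hval⟩
      · have hnu : Lam.CbvNormal (readback u) := fun ⟨N, h⟩ => hn ⟨_, Lam.CbvStep.appL h⟩
        exact (IU.mpr hnu) ⟨_, hs⟩
      · have hnv : Lam.CbvNormal (readback v) := fun ⟨N, h⟩ => hn ⟨_, Lam.CbvStep.appR h⟩
        exact (IV.mpr hnv) ⟨_, hs⟩
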